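/- arXiv:0802.2689 — 6 statements merged into one kernel-verified Lean document; each statement's English description precedes it below -/
import Mathlib

section
/- Every involution in PGL(2, C(x)) is conjugate to the class of the matrix [[0, f],[1, 0]] for some nonzero f in C(x). Moreover, the classes of [[0,f],[1,0]] and [[0,g],[1,0]] are conjugate in PGL(2, C(x)) if and only if f/g is a square in C(x)*. -/
/-!
A non-scalar `2 × 2` matrix `M` has a cyclic vector `v`, i.e. `v` and `M v` form a basis, and in
that basis Cayley–Hamilton shows that `M` becomes the companion matrix `[[0, -det M], [1, tr M]]`.
If the class of `M` in `PGL₂` is an involution, `M²` is scalar while `M` is not, which forces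
`tr M = 0`. For the second part, `P [[0, f], [1, 0]] = u [[0, g], [1, 0]] P` with `P` invertible
gives `f = u² g` entrywise, and conversely `diag(1, r)` conjugates one matrix to `r` times the other
when `f = r² g`.
-/

/-- The field `ℂ(x)` of rational functions. -/
abbrev Kx := RatFunc ℂ

/-- The group `PGL(2, ℂ(x)) = GL(2, ℂ(x))` modulo its center. -/
abbrev PGL2Kx :=
  Matrix.GeneralLinearGroup (Fin 2) Kx ⧸
    Subgroup.center (Matrix.GeneralLinearGroup (Fin 2) Kx)

theorem QuotientGroup.isConj_mk_center_iff {G : Type*} [Group G] {a b : G} :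
    IsConj (a : G ⧸ Subgroup.center G) b ↔
      ∃ c : G, ∃ z ∈ Subgroup.center G, c * a = z * b * c := by
  simp only [isConj_iff]
  constructor
  · rintro ⟨c, hc⟩
    obtain ⟨c, rfl⟩ := QuotientGroup.mk_surjective c
    have hz : (c * a * c⁻¹)⁻¹ * b ∈ Subgroup.center G := QuotientGroup.eq.mp hc
    refine ⟨c, ((c * a * c⁻¹)⁻¹ * b)⁻¹, Subgroup.inv_mem _ hz, ?_⟩
    rw [← Subgroup.mem_center_iff.mp (Subgroup.inv_mem _ hz) b]
    group
  · rintro ⟨c, z, hz, h⟩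
    refine ⟨c, ?_⟩
    rw [← QuotientGroup.mk_mul, ← QuotientGroup.mk_inv, ← QuotientGroup.mk_mul, h,
      mul_inv_cancel_right, QuotientGroup.mk_mul, (QuotientGroup.eq_one_iff z).mpr hz, one_mul]

namespace Matrix

section FinTwo

variable {R K : Type*} [CommRing R] [Field K]

theorem mem_range_scalar_fin_two_iff (M : Matrix (Fin 2) (Fin 2) R) :
    M ∈ Set.range (scalar (Fin 2)) ↔ M 0 1 = 0 ∧ M 1 0 = 0 ∧ M 0 0 = M 1 1 := by
  constructor
  · rintro ⟨p, rfl⟩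
    simp
  · rintro ⟨h01, h10, h00⟩
    refine ⟨M 1 1, ?_⟩
    ext i j
    fin_cases i <;> fin_cases j <;> simp [h01, h10, h00]

theorem trace_eq_zero_of_mul_self_mem_range_scalar [NoZeroDivisors R]
    {M : Matrix (Fin 2) (Fin 2) R} (hM : M ∉ Set.range (scalar (Fin 2)))
    (hsq : M * M ∈ Set.range (scalar (Fin 2))) : M.trace = 0 := by
  rw [mem_range_scalar_fin_two_iff] at hM hsq
  simp only [mul_apply, Fin.sum_univ_two] at hsq
  obtain ⟨h01, h10, h00⟩ := hsq
  rw [trace_fin_two]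
  by_contra ht
  refine hM ⟨?_, ?_, ?_⟩
  · exact (mul_eq_zero.mp (by linear_combination h01)).resolve_right ht
  · exact (mul_eq_zero.mp (by linear_combination h10)).resolve_right ht
  · exact sub_eq_zero.mp <| (mul_eq_zero.mp
      (by linear_combination h00 : (M 0 0 - M 1 1) * (M 0 0 + M 1 1) = 0)).resolve_right ht

/-- One of `e₀`, `e₁`, `e₀ + e₁` is a cyclic vector. -/
theorem exists_det_ne_zero_of_notMem_range_scalar
    {M : Matrix (Fin 2) (Fin 2) R} (hM : M ∉ Set.range (scalar (Fin 2))) :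
    ∃ v : Fin 2 → R, (of ![v, M *ᵥ v])ᵀ.det ≠ 0 := by
  rw [mem_range_scalar_fin_two_iff] at hM
  by_contra! h
  have h₁ := h ![1, 0]
  have h₂ := h ![0, 1]
  have h₃ := h ![1, 1]
  simp [det_fin_two] at h₁ h₂ h₃
  exact hM ⟨h₂, h₁, by linear_combination h₁ - h₂ - h₃⟩

theorem mul_companion_fin_two (M : Matrix (Fin 2) (Fin 2) R) (v : Fin 2 → R) :
    (of ![v, M *ᵥ v])ᵀ * !![0, -M.det; 1, M.trace] = M * (of ![v, M *ᵥ v])ᵀ := by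
  ext i j
  fin_cases i <;> fin_cases j <;>
    simp [mul_apply, Fin.sum_univ_two, det_fin_two, trace_fin_two] <;> ring

theorem exists_mul_companion_eq_of_notMem_range_scalar
    {M : Matrix (Fin 2) (Fin 2) K} (hM : M ∉ Set.range (scalar (Fin 2))) :
    ∃ P : GL (Fin 2) K, P * !![0, -M.det; 1, M.trace] = M * P := by
  obtain ⟨v, hv⟩ := exists_det_ne_zero_of_notMem_range_scalar hM
  exact ⟨.mkOfDetNeZero _ hv, mul_companion_fin_two M v⟩

end FinTwo

namespace GeneralLinearGroup

theorem isConj_mk_center_iff {n R : Type*} [Fintype n] [DecidableEq n] [CommRing R]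
    {A B : GL n R} :
    IsConj (A : GL n R ⧸ Subgroup.center (GL n R)) B ↔
      ∃ (P : GL n R) (u : Rˣ), (P * A : Matrix n n R) = (u : R) • (B * P : Matrix n n R) := by
  have hval (u : Rˣ) (P : GL n R) :
      ((scalar n u * B * P : GL n R) : Matrix n n R) = (u : R) • (B * P : Matrix n n R) := by
    rw [mul_assoc, Units.val_mul, coe_scalar, scalar_apply, ← smul_eq_diagonal_mul, Units.val_mul]
  rw [QuotientGroup.isConj_mk_center_iff, center_eq_range_scalar]
  constructor
  · rintro ⟨P, _, ⟨u, rfl⟩, h⟩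
    exact ⟨P, u, by rw [← hval, ← h, Units.val_mul]⟩
  · rintro ⟨P, u, h⟩
    exact ⟨P, scalar n u, ⟨u, rfl⟩, Units.ext (by rw [hval, ← h, Units.val_mul])⟩

variable {K : Type*} [Field K]

theorem exists_isConj_mk_companion_of_mul_self_eq_one
    (σ : GL (Fin 2) K ⧸ Subgroup.center (GL (Fin 2) K)) (hσ2 : σ * σ = 1) (hσ1 : σ ≠ 1) :
    ∃ (f : K) (_ : f ≠ 0) (g : GL (Fin 2) K),
      (g : Matrix (Fin 2) (Fin 2) K) = !![0, f; 1, 0] ∧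
      IsConj (g : GL (Fin 2) K ⧸ Subgroup.center (GL (Fin 2) K)) σ := by
  obtain ⟨M, rfl⟩ := QuotientGroup.mk_surjective σ
  rw [← QuotientGroup.mk_mul, QuotientGroup.eq_one_iff, mem_center_iff_val_mem_range_scalar,
    Units.val_mul] at hσ2
  rw [ne_eq, QuotientGroup.eq_one_iff, mem_center_iff_val_mem_range_scalar] at hσ1
  obtain ⟨P, hP⟩ := exists_mul_companion_eq_of_notMem_range_scalar hσ1
  rw [trace_eq_zero_of_mul_self_mem_range_scalar hσ1 hσ2] at hP
  refine ⟨-(M : Matrix (Fin 2) (Fin 2) K).det, neg_ne_zero.mpr M.det_ne_zero, P⁻¹ * M * P, ?_,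
    (QuotientGroup.mk' _).map_isConj (isConj_iff.mpr ⟨P, by group⟩)⟩
  rw [Units.val_mul, Units.val_mul, mul_assoc, ← hP, ← mul_assoc, ← Units.val_mul, inv_mul_cancel,
    Units.val_one, one_mul]

theorem isConj_mk_iff_isSquare_div {f g : K} (hf : f ≠ 0) (hg : g ≠ 0) {A B : GL (Fin 2) K}
    (hA : (A : Matrix (Fin 2) (Fin 2) K) = !![0, f; 1, 0])
    (hB : (B : Matrix (Fin 2) (Fin 2) K) = !![0, g; 1, 0]) :
    IsConj (A : GL (Fin 2) K ⧸ Subgroup.center (GL (Fin 2) K)) B ↔ IsSquare (f / g) := by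
  rw [isConj_mk_center_iff, hA, hB]
  constructor
  · rintro ⟨P, u, hP⟩
    obtain ⟨⟨h00, h01⟩, h10, h11⟩ := by
      simpa [← Matrix.ext_iff, Fin.forall_fin_two, mul_apply, vecMul, dotProduct,
        Fin.sum_univ_two] using hP
    have hcol : P 0 0 ≠ 0 ∨ P 1 0 ≠ 0 := by
      by_contra! h
      exact P.det_ne_zero (by simp [det_fin_two, h])
    have hfg : f = u * u * g := by
      rcases hcol with h | h
      · exact mul_right_cancel₀ h (by linear_combination h01 + u * g * h10)
      · exact mul_right_cancel₀ h (by linear_combination h11 + u * h00)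
    exact ⟨u, by rw [hfg, mul_div_cancel_right₀ _ hg]⟩
  · rintro ⟨r, hr⟩
    have hr0 : r ≠ 0 := by rintro rfl; simp [hf, hg] at hr
    have hfg : f = r * r * g := by rw [← hr, div_mul_cancel₀ _ hg]
    refine ⟨.mkOfDetNeZero !![1, 0; 0, r] (by simpa using hr0), .mk0 r hr0, ?_⟩
    ext i j
    fin_cases i <;> fin_cases j <;> simp [hfg]
    ring

end GeneralLinearGroup

end Matrix

open Matrix.GeneralLinearGroup in
/-- Every involution of `PGL(2, ℂ(x))` is conjugate to the class of the matrix
`[[0, f], [1, 0]]` for some `f ∈ ℂ(x)*`; moreover the classes of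
`[[0, f], [1, 0]]` and `[[0, g], [1, 0]]` are conjugate in `PGL(2, ℂ(x))` if
and only if `f/g` is a square in `ℂ(x)*`. -/
theorem stmt_0 :
    (∀ σ : PGL2Kx, σ * σ = 1 → σ ≠ 1 →
      ∃ (f : Kx) (_ : f ≠ 0) (g : Matrix.GeneralLinearGroup (Fin 2) Kx),
        (↑g : Matrix (Fin 2) (Fin 2) Kx) = !![0, f; 1, 0] ∧
        IsConj (QuotientGroup.mk g : PGL2Kx) σ) ∧
    (∀ f g : Kx, f ≠ 0 → g ≠ 0 →
      ∀ A B : Matrix.GeneralLinearGroup (Fin 2) Kx,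
        (↑A : Matrix (Fin 2) (Fin 2) Kx) = !![0, f; 1, 0] →
        (↑B : Matrix (Fin 2) (Fin 2) Kx) = !![0, g; 1, 0] →
        (IsConj (QuotientGroup.mk A : PGL2Kx) (QuotientGroup.mk B) ↔
          IsSquare (f / g))) :=
  ⟨exists_isConj_mk_companion_of_mul_self_eq_one,
    fun _ _ hf hg _ _ ↦ isConj_mk_iff_isSquare_div hf hg⟩
end

section
/- Let f ∈ C(x)* be a non-square and let σ be the class of [[0,f],[1,0]] in PGL(2,C(x)). Then the normalizer N of the subgroup generated by σ in PGL(2,C(x)) consists exactly of the classes of matrices of the form [[a, b·f],[b, a]] or [[a, -b·f],[b, -a]] with a, b ∈ C(x) not both zero. -/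
open Subgroup in
theorem mem_normalizer_zpowers_iff_commute_of_sq_eq_one {G : Type*} [Group G] {s : G}
    (hs : s ^ 2 = 1) (hs₁ : s ≠ 1) {x : G} :
    x ∈ normalizer (zpowers s) ↔ Commute x s := by
  refine ⟨fun hx ↦ ?_, fun hx ↦ centralizer_le_normalizer _ fun y hy ↦ ?_⟩
  · obtain ⟨n, hn⟩ := mem_zpowers_iff.mp ((mem_normalizer_iff.mp hx s).mp (mem_zpowers s))
    have hsn : s ^ n = 1 ∨ s ^ n = s := by
      rcases Int.even_or_odd' n with ⟨k, rfl | rfl⟩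
      · simp [zpow_mul, hs]
      · simp [zpow_add, zpow_mul, hs]
    rcases hsn with h | h
    · rw [h, eq_comm, mul_inv_eq_one, mul_eq_left] at hn
      exact absurd hn hs₁
    · rw [h, eq_comm, mul_inv_eq_iff_eq_mul] at hn
      exact hn
  · obtain ⟨n, rfl⟩ := mem_zpowers_iff.mp hy
    exact (hx.zpow_right n).eq.symm

namespace Matrix

variable {R : Type*} [CommRing R] {f : R}

theorem mul_comm_fin_two_swap_iff {M : Matrix (Fin 2) (Fin 2) R} :
    M * !![0, f; 1, 0] = !![0, f; 1, 0] * M ↔ ∃ a b, M = !![a, b * f; b, a] := by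
  constructor
  · intro h
    refine ⟨M 0 0, M 1 0, ?_⟩
    have h₀₁ : M 0 1 = f * M 1 0 := by
      simpa [mul_apply, Fin.sum_univ_two] using congrFun₂ h 0 0
    have h₁₁ : M 1 1 = M 0 0 := by
      simpa [mul_apply, Fin.sum_univ_two] using congrFun₂ h 1 0
    ext i j; fin_cases i <;> fin_cases j <;> simp [h₀₁, h₁₁, mul_comm]
  · rintro ⟨a, b, rfl⟩
    ext i j; fin_cases i <;> fin_cases j <;> simp [mul_comm]

theorem mul_eq_neg_fin_two_swap_iff {M : Matrix (Fin 2) (Fin 2) R} :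
    M * !![0, f; 1, 0] = -(!![0, f; 1, 0] * M) ↔ ∃ a b, M = !![a, -(b * f); b, -a] := by
  constructor
  · intro h
    refine ⟨M 0 0, M 1 0, ?_⟩
    have h₀₁ : M 0 1 = -(f * M 1 0) := by
      simpa [mul_apply, vecMul, dotProduct, Fin.sum_univ_two] using congrFun₂ h 0 0
    have h₁₁ : M 1 1 = -M 0 0 := by
      simpa [mul_apply, vecMul, dotProduct, Fin.sum_univ_two] using congrFun₂ h 1 0
    ext i j; fin_cases i <;> fin_cases j <;> simp [h₀₁, h₁₁, mul_comm]
  · rintro ⟨a, b, rfl⟩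
    ext i j; fin_cases i <;> fin_cases j <;> simp [mul_comm]

end Matrix

namespace Matrix.GeneralLinearGroup

section CommRing

variable {R : Type*} [CommRing R] {f : R} {A : GL (Fin 2) R}

theorem mk_sq_eq_one_of_fin_two_swap (hA : (A : Matrix (Fin 2) (Fin 2) R) = !![0, f; 1, 0]) :
    (A : GL (Fin 2) R ⧸ Subgroup.center (GL (Fin 2) R)) ^ 2 = 1 := by
  rw [← QuotientGroup.mk_pow, QuotientGroup.eq_one_iff, mem_center_iff_val_mem_range_scalar]
  refine ⟨f, ?_⟩
  rw [Units.val_pow_eq_pow_val, hA]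
  ext i j; fin_cases i <;> fin_cases j <;> simp [sq]

theorem mk_ne_one_of_fin_two_swap [Nontrivial R]
    (hA : (A : Matrix (Fin 2) (Fin 2) R) = !![0, f; 1, 0]) :
    (A : GL (Fin 2) R ⧸ Subgroup.center (GL (Fin 2) R)) ≠ 1 := by
  rw [Ne, QuotientGroup.eq_one_iff, mem_center_iff_val_mem_range_scalar]
  rintro ⟨c, hc⟩
  simpa [hA] using congrFun₂ hc 1 0

end CommRing

variable {R : Type*} [CommRing R] [IsDomain R]

theorem commute_mk_iff_fin_two {g h : GL (Fin 2) R} :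
    Commute (g : GL (Fin 2) R ⧸ Subgroup.center (GL (Fin 2) R)) h ↔
      (g : Matrix (Fin 2) (Fin 2) R) * h = h * g ∨
        (g : Matrix (Fin 2) (Fin 2) R) * h = -(h * g) := by
  have hmk : Commute (g : GL (Fin 2) R ⧸ Subgroup.center (GL (Fin 2) R)) h ↔
      ∃ u : Rˣ, g * h * scalar (Fin 2) u = h * g :=
    ProjGenLinGroup.mk_eq_mk_iff
  rw [hmk]
  constructor
  · rintro ⟨u, hu⟩
    have hu2 : u ^ 2 = 1 := by
      simpa [mul_comm] using congrArg det hu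
    rcases sq_eq_one_iff.mp (congrArg Units.val hu2) with hu1 | hu1 <;>
      [left; right] <;>
      simpa only [Units.ext_iff, Units.val_mul, coe_scalar, hu1, map_one, map_neg, mul_one,
        mul_neg, neg_eq_iff_eq_neg] using hu
  · rintro (h₁ | h₁)
    · exact ⟨1, by simpa only [Units.ext_iff, Units.val_mul, coe_scalar, Units.val_one, map_one,
        mul_one] using h₁⟩
    · exact ⟨-1, by simpa only [Units.ext_iff, Units.val_mul, coe_scalar, Units.val_neg,
        Units.val_one, map_one, map_neg, mul_one, mul_neg, neg_eq_iff_eq_neg] using h₁⟩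

theorem commute_mk_fin_two_swap_iff {f : R} {g A : GL (Fin 2) R}
    (hA : (A : Matrix (Fin 2) (Fin 2) R) = !![0, f; 1, 0]) :
    Commute (g : GL (Fin 2) R ⧸ Subgroup.center (GL (Fin 2) R)) A ↔
      ∃ a b : R, ¬ (a = 0 ∧ b = 0) ∧
        ((g : Matrix (Fin 2) (Fin 2) R) = !![a, b * f; b, a] ∨
          (g : Matrix (Fin 2) (Fin 2) R) = !![a, -(b * f); b, -a]) := by
  rw [commute_mk_iff_fin_two, hA, Matrix.mul_comm_fin_two_swap_iff,
    Matrix.mul_eq_neg_fin_two_swap_iff]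
  constructor
  · rintro (⟨a, b, hg⟩ | ⟨a, b, hg⟩) <;> refine ⟨a, b, ?_, by tauto⟩ <;> rintro ⟨rfl, rfl⟩ <;>
      exact g.ne_zero (hg.trans (by ext i j; fin_cases i <;> fin_cases j <;> simp))
  · rintro ⟨a, b, -, hg | hg⟩
    exacts [Or.inl ⟨a, b, hg⟩, Or.inr ⟨a, b, hg⟩]

end Matrix.GeneralLinearGroup

theorem stmt_1_general (f : Kx)
    (A : Matrix.GeneralLinearGroup (Fin 2) Kx)
    (hA : (↑A : Matrix (Fin 2) (Fin 2) Kx) = !![0, f; 1, 0]) :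
    ∀ x : PGL2Kx,
      x ∈ Subgroup.normalizer
        (Subgroup.zpowers (QuotientGroup.mk A : PGL2Kx)) ↔
      ∃ a b : Kx, ¬ (a = 0 ∧ b = 0) ∧
        ∃ g : Matrix.GeneralLinearGroup (Fin 2) Kx,
          (QuotientGroup.mk g : PGL2Kx) = x ∧
          ((↑g : Matrix (Fin 2) (Fin 2) Kx) = !![a, b * f; b, a] ∨
           (↑g : Matrix (Fin 2) (Fin 2) Kx) = !![a, -(b * f); b, -a]) := by
  intro x
  rw [mem_normalizer_zpowers_iff_commute_of_sq_eq_one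
    (Matrix.GeneralLinearGroup.mk_sq_eq_one_of_fin_two_swap hA)
    (Matrix.GeneralLinearGroup.mk_ne_one_of_fin_two_swap hA)]
  constructor
  · intro hx
    obtain ⟨g, rfl⟩ := QuotientGroup.mk_surjective x
    obtain ⟨a, b, hab, hg⟩ := (Matrix.GeneralLinearGroup.commute_mk_fin_two_swap_iff hA).mp hx
    exact ⟨a, b, hab, g, rfl, hg⟩
  · rintro ⟨a, b, hab, g, rfl, hg⟩
    exact (Matrix.GeneralLinearGroup.commute_mk_fin_two_swap_iff hA).mpr ⟨a, b, hab, hg⟩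

/-- Let `f ∈ ℂ(x)*` be a non-square and `σ` the class of `[[0, f], [1, 0]]` in
`PGL(2, ℂ(x))`.  Then the normalizer of the subgroup generated by `σ` consists
exactly of the classes of matrices of the form `[[a, b·f], [b, a]]` or
`[[a, -b·f], [b, -a]]` with `a, b ∈ ℂ(x)` not both zero. -/
theorem stmt_1 (f : Kx) (hf : f ≠ 0) (hnsq : ¬ IsSquare f)
    (A : Matrix.GeneralLinearGroup (Fin 2) Kx)
    (hA : (↑A : Matrix (Fin 2) (Fin 2) Kx) = !![0, f; 1, 0]) :
    ∀ x : PGL2Kx,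
      x ∈ Subgroup.normalizer
        (Subgroup.zpowers (QuotientGroup.mk A : PGL2Kx)) ↔
      ∃ a b : Kx, ¬ (a = 0 ∧ b = 0) ∧
        ∃ g : Matrix.GeneralLinearGroup (Fin 2) Kx,
          (QuotientGroup.mk g : PGL2Kx) = x ∧
          ((↑g : Matrix (Fin 2) (Fin 2) Kx) = !![a, b * f; b, a] ∨
           (↑g : Matrix (Fin 2) (Fin 2) Kx) = !![a, -(b * f); b, -a]) :=
  stmt_1_general f A hA
end

section
/- Let S be a smooth projective rational surface with a conic bundle π: S → P¹ having k singular fibers, and let G be a group of automorphisms of S preserving π, acting trivially on the base, with |G| ∈ {2,4}, and such that the G-invariant part of Pic(S) has rank 2 (hence equals Z·K_S ⊕ Z·f where f is the class of a fiber). If there exists a G-orbit of l pairwise disjoint (−1)-curves with l ∈ {1,2,4}, then k ∈ {2,3,5}. In particular, if k = 4 or k ≥ 6, the pair (G,S) is minimal. -/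
/-!
The class `D = C₁ + ⋯ + C_l` of the orbit is `G`-invariant, so `D = aK + bf`.
Intersecting with `K`, `D` and `f` gives `a(8 - k) - 2b = -l`,
`a²(8 - k) - 4ab = -l` and `-2a = D·f ≥ 0`. Eliminating `b` leaves
`a²(8 - k) = l(1 - 2a)`; as `a²` is coprime to `1 - 2a`, `a²` divides `l ∈ {1, 2, 4}`,
whence `(a, l, k) ∈ {(-1, 1, 5), (-1, 2, 2), (-2, 4, 3)}`.
-/

open Finset

/-- A witness of non-minimality of the pair `(G, S)`: a `G`-orbit of `l`
pairwise disjoint `(-1)`-curves on the conic bundle (`l ∈ {1,2,4}`), i.e.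
classes `C₁, …, C_l` in `Pic(S)` permuted transitively by `G`, with
`Cᵢ² = Cᵢ·K = -1`, `Cᵢ·Cⱼ = 0` for `i ≠ j`, and `Cᵢ·f ≥ 0`. -/
def NonMinimalWitness (Pic : Type) [AddCommGroup Pic]
    (inter : Pic →ₗ[ℤ] Pic →ₗ[ℤ] ℤ) (G : Type) [Group G]
    (ρ : G →* Multiplicative (AddAut Pic)) (K f : Pic) : Prop :=
  ∃ l : ℕ, (l = 1 ∨ l = 2 ∨ l = 4) ∧ ∃ C : Fin l → Pic,
    (∀ g i, ∃ j, ρ g (C i) = C j) ∧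
    (∀ i j, ∃ g, ρ g (C i) = C j) ∧
    (∀ i, inter (C i) (C i) = -1) ∧
    (∀ i, inter (C i) K = -1) ∧
    (∀ i j, i ≠ j → inter (C i) (C j) = 0) ∧
    (∀ i, 0 ≤ inter (C i) f)

theorem AddAut.apply_sum_eq_of_mapsTo {M ι : Type*} [AddCommMonoid M] [Fintype ι]
    (e : AddAut M) {C : ι → M} (hC : Function.Injective C) (h : ∀ i, ∃ j, e (C i) = C j) :
    e (∑ i, C i) = ∑ i, C i := by
  choose σ hσ using h
  have hσ_inj : Function.Injective σ := fun i j hij =>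
    hC (e.injective (by rw [hσ i, hσ j, hij]))
  rw [map_sum]
  exact Fintype.sum_bijective σ (Finite.injective_iff_bijective.mp hσ_inj) _ _ hσ

section OrthogonalExceptional

variable {M ι : Type*} [AddCommGroup M] (inter : M →ₗ[ℤ] M →ₗ[ℤ] ℤ) {C : ι → M}
  (hCC : ∀ i, inter (C i) (C i) = -1) (hdisj : ∀ i j, i ≠ j → inter (C i) (C j) = 0)
include hCC hdisj

theorem injective_of_orthogonal_exceptional : Function.Injective C := by
  intro i j hij
  by_contra hne
  have := hdisj i j hne
  rw [hij, hCC j] at this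
  exact absurd this (by norm_num)

theorem inter_sum_self_of_orthogonal_exceptional [Fintype ι] :
    inter (∑ i, C i) (∑ i, C i) = -Fintype.card ι := by
  have hrow : ∀ i, inter (C i) (∑ j, C j) = -1 := fun i => by
    rw [map_sum, Finset.sum_eq_single i (fun j _ hj => hdisj i j hj.symm) (by simp), hCC]
  rw [map_sum inter, LinearMap.sum_apply]
  simp [hrow]

end OrthogonalExceptional

theorem singular_fibers_eq_of_orbit_class_eqns {k l : ℕ} {a b : ℤ} (hl : l = 1 ∨ l = 2 ∨ l = 4)
    (hDK : a * (8 - k) - 2 * b = -l) (hDD : a ^ 2 * (8 - k) - 4 * a * b = -l) (ha : a ≤ 0) :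
    k = 2 ∨ k = 3 ∨ k = 5 := by
  have key : a ^ 2 * (8 - k) = l * (1 - 2 * a) := by linear_combination 2 * a * hDK - hDD
  have hl_bounds : (1 : ℤ) ≤ l ∧ (l : ℤ) ≤ 4 := by rcases hl with rfl | rfl | rfl <;> norm_num
  have ha_ne : a ≠ 0 := by rintro rfl; simp at key; omega
  have hk_pos : (1 : ℤ) ≤ 8 - k := by nlinarith [sq_nonneg a]
  have ha_ge : -9 ≤ a := by nlinarith [sq_nonneg (a + 9)]
  interval_cases a <;> rcases hl with rfl | rfl | rfl <;> omega

theorem stmt_7_general (Pic : Type) [AddCommGroup Pic]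
    (inter : Pic →ₗ[ℤ] Pic →ₗ[ℤ] ℤ)
    (hsymm : ∀ x y, inter x y = inter y x)
    (K f : Pic) (k : ℕ)
    (hKK : inter K K = 8 - (k : ℤ)) (hKf : inter K f = -2)
    (hff : inter f f = 0)
    (G : Type) [Group G]
    (ρ : G →* Multiplicative (AddAut Pic))
    (hrank : ∀ x : Pic, (∀ g, ρ g x = x) → ∃ a b : ℤ, x = a • K + b • f) :
    (NonMinimalWitness Pic inter G ρ K f → k = 2 ∨ k = 3 ∨ k = 5) ∧
    ((k = 4 ∨ 6 ≤ k) → ¬ NonMinimalWitness Pic inter G ρ K f) := by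
  have main : NonMinimalWitness Pic inter G ρ K f → k = 2 ∨ k = 3 ∨ k = 5 := by
    rintro ⟨l, hl, C, hperm, -, hCC, hCK, hdisj, hCf⟩
    have hinj := injective_of_orthogonal_exceptional inter hCC hdisj
    obtain ⟨a, b, hD⟩ := hrank (∑ i, C i) fun g =>
      AddAut.apply_sum_eq_of_mapsTo (Multiplicative.toAdd (ρ g)) hinj (hperm g)
    have hDK : inter (∑ i, C i) K = -l := by simp [LinearMap.sum_apply, hCK]
    have hDf : 0 ≤ inter (∑ i, C i) f := by
      simpa [LinearMap.sum_apply] using Finset.sum_nonneg fun i _ => hCf i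
    have hDD := inter_sum_self_of_orthogonal_exceptional inter hCC hdisj
    rw [hD] at hDK hDf hDD
    simp only [map_add, map_smul, LinearMap.add_apply, LinearMap.smul_apply, smul_eq_mul,
      hsymm f K, hKK, hKf, hff, Fintype.card_fin] at hDK hDf hDD
    have hK : a * (8 - k) - 2 * b = -l := by linear_combination hDK
    have hself : a ^ 2 * (8 - k) - 4 * a * b = -l := by linear_combination hDD
    exact singular_fibers_eq_of_orbit_class_eqns hl hK hself (by linarith)
  exact ⟨main, fun hk hw => by have := main hw; omega⟩

/-- Let `S` be a rational surface with a conic bundle `π : S → ℙ¹` having `k`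
singular fibers (so `K² = 8 - k`, `K·f = -2`, `f² = 0`, where `f` is the fiber
class), and `G ⊂ Aut(S, π)` a group of order `2` or `4` acting trivially on the
base and such that `Pic(S)^G` has rank `2`, i.e. equals `ℤ·K_S ⊕ ℤ·f`
(hypothesis `hrank`).  The action of `G` on `Pic(S)` is recorded by
`ρ : G →* AddAut Pic`, preserving the intersection form and fixing `K` and `f`.
If there exists a `G`-orbit of `l` pairwise disjoint `(-1)`-curves with
`l ∈ {1,2,4}`, then `k ∈ {2,3,5}`.  In particular, if `k = 4` or `k ≥ 6`,
the pair `(G, S)` is minimal (no such orbit exists, so no `G`-equivariant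
birational contraction is possible). -/
theorem stmt_7 (Pic : Type) [AddCommGroup Pic]
    (inter : Pic →ₗ[ℤ] Pic →ₗ[ℤ] ℤ)
    (hsymm : ∀ x y, inter x y = inter y x)
    (K f : Pic) (k : ℕ)
    (hKK : inter K K = 8 - (k : ℤ)) (hKf : inter K f = -2)
    (hff : inter f f = 0)
    (G : Type) [Group G] (hG : Nat.card G = 2 ∨ Nat.card G = 4)
    (ρ : G →* Multiplicative (AddAut Pic))
    (hρ : ∀ g x y, inter (ρ g x) (ρ g y) = inter x y)
    (hρK : ∀ g, ρ g K = K) (hρf : ∀ g, ρ g f = f)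
    (hrank : ∀ x : Pic, (∀ g, ρ g x = x) → ∃ a b : ℤ, x = a • K + b • f) :
    (NonMinimalWitness Pic inter G ρ K f → k = 2 ∨ k = 3 ∨ k = 5) ∧
    ((k = 4 ∨ 6 ≤ k) → ¬ NonMinimalWitness Pic inter G ρ K f) :=
  stmt_7_general Pic inter hsymm K f k hKK hKf hff G ρ hrank
end

section
/- Let S → P¹ be a conic bundle with at least one singular fiber, K the canonical class, f the class of a fiber. Suppose C = −aK + bf (a, b ∈ Z) is the class of the fibers of a second conic bundle structure on S with fibers different from those of the first, i.e. C² = 0, −K·C = 2, C·f > 0. Then b = −1 and a·K² = 4; in particular K² ∈ {1, 2, 4}. -/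
/-!
Pairing `C = -aK + bf` with `f`, `K` and itself gives `C·f = 2a`, `-K·C = aK² + 2b` and
`C² = a(aK² + 4b)`. So `C·f > 0` forces `a > 0`, then `C² = 0` gives `aK² = -4b`, and
`-K·C = 2` becomes `-2b = 2`. Finally `K²` is a positive divisor of `4`.
-/

section IntersectionNumbers

variable {M : Type*} [AddCommGroup M] (B : M →ₗ[ℤ] M →ₗ[ℤ] ℤ) {K f : M}

theorem inter_neg_smul_add_smul_right (hKf : B K f = -2) (hff : B f f = 0) (a b : ℤ) :
    B ((-a) • K + b • f) f = 2 * a := by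
  simp only [map_add, map_smul, LinearMap.add_apply, LinearMap.smul_apply, hKf, hff,
    smul_eq_mul]
  ring

theorem inter_left_neg_smul_add_smul (hKf : B K f = -2) (a b : ℤ) :
    B K ((-a) • K + b • f) = -(a * B K K) - 2 * b := by
  simp only [map_add, map_smul, hKf, smul_eq_mul]
  ring

theorem inter_self_neg_smul_add_smul (hsymm : ∀ x y, B x y = B y x)
    (hKf : B K f = -2) (hff : B f f = 0) (a b : ℤ) :
    B ((-a) • K + b • f) ((-a) • K + b • f) = a * (a * B K K + 4 * b) := by
  have hfK : B f K = -2 := hsymm f K ▸ hKf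
  simp only [map_add, map_smul, LinearMap.add_apply, LinearMap.smul_apply, hKf, hfK, hff,
    smul_eq_mul]
  ring

end IntersectionNumbers

theorem eq_neg_one_and_mul_eq_four_of_isotropic {a b d : ℤ} (ha : a ≠ 0)
    (hsq : a * (a * d + 4 * b) = 0) (hdeg : -(a * d) - 2 * b = -2) :
    b = -1 ∧ a * d = 4 := by
  have had : a * d = -4 * b := by
    linarith [(mul_eq_zero.mp hsq).resolve_left ha]
  constructor <;> linarith

theorem eq_one_or_two_or_four_of_mul_eq_four {a d : ℤ} (ha : 0 < a) (h : a * d = 4) :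
    d = 1 ∨ d = 2 ∨ d = 4 := by
  have hd_pos : 0 < d := pos_of_mul_pos_right (h ▸ four_pos) ha.le
  have hd_le : d ≤ 4 := by nlinarith
  interval_cases d <;> omega

theorem stmt_9_general (Pic : Type) [AddCommGroup Pic]
    (inter : Pic →ₗ[ℤ] Pic →ₗ[ℤ] ℤ)
    (hsymm : ∀ x y, inter x y = inter y x)
    (K f C : Pic) (k : ℤ)
    (hKK : inter K K = 8 - k) (hKf : inter K f = -2) (hff : inter f f = 0)
    (a b : ℤ) (hC : C = (-a) • K + b • f)
    (hC2 : inter C C = 0) (hKC : inter K C = -2) (hCf : 0 < inter C f) :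
    b = -1 ∧ a * (8 - k) = 4 ∧
      (inter K K = 1 ∨ inter K K = 2 ∨ inter K K = 4) := by
  subst hC
  have ha : 0 < a := by
    rw [inter_neg_smul_add_smul_right inter hKf hff] at hCf
    omega
  rw [inter_self_neg_smul_add_smul inter hsymm hKf hff] at hC2
  rw [inter_left_neg_smul_add_smul inter hKf] at hKC
  obtain ⟨hb, hK2⟩ := eq_neg_one_and_mul_eq_four_of_isotropic ha.ne' hC2 hKC
  exact ⟨hb, hKK ▸ hK2, eq_one_or_two_or_four_of_mul_eq_four ha hK2⟩

/-- On a conic bundle `S → ℙ¹` with at least one singular fiber (`k ≥ 1`,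
`K² = 8 - k`, `K·f = -2`, `f² = 0`), if `C = -a•K + b•f` is the class of the
fibers of a second conic bundle structure (so `C² = 0`, `K·C = -2`, i.e.
`-K·C = 2`) with fibers different from the first (`C·f > 0`), then `b = -1`
and `a·K² = 4`; in particular `K² ∈ {1, 2, 4}`. -/
theorem stmt_9 (Pic : Type) [AddCommGroup Pic]
    (inter : Pic →ₗ[ℤ] Pic →ₗ[ℤ] ℤ)
    (hsymm : ∀ x y, inter x y = inter y x)
    (K f C : Pic) (k : ℤ) (hk : 1 ≤ k)
    (hKK : inter K K = 8 - k) (hKf : inter K f = -2) (hff : inter f f = 0)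
    (a b : ℤ) (hC : C = (-a) • K + b • f)
    (hC2 : inter C C = 0) (hKC : inter K C = -2) (hCf : 0 < inter C f) :
    b = -1 ∧ a * (8 - k) = 4 ∧
      (inter K K = 1 ∨ inter K K = 2 ∨ inter K K = 4) :=
  stmt_9_general Pic inter hsymm K f C k hKK hKf hff a b hC hC2 hKC hCf
end

section
/- Let π: S → P¹ be a (Z/2)² conic bundle with k singular fibers, whose three nontrivial involutions σ₁, σ₂, σ₃ of Aut(S/P¹) fix hyperelliptic curves C₁, C₂, C₃ ramified over 2a₁, 2a₂, 2a₃ points of P¹ respectively. Then in Pic(S), each C_i is linearly equivalent to −K_S + (a_i − 2)f where f is the fiber class, and C_i² = 4a_i − k. -/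
/-! Since `f² = 0` and `K·f = -2`, writing `C = αK + βf` gives `C·f = -2α`, so `α = -1`.
Then `C + K = βf`, the genus formula becomes `2β = 2a - 4`, and `C² = K² + 4β = 4a - k`. -/

section ConicBundleLattice

variable {R M : Type*} [CommRing R] [AddCommGroup M] [Module R M]
  (B : M →ₗ[R] M →ₗ[R] R) {K f : M}

theorem apply_smul_add_smul_fiber (hKf : B K f = -2) (hff : B f f = 0) (α β : R) :
    B (α • K + β • f) f = -2 * α := by
  simp [hKf, hff, mul_comm]

theorem apply_neg_add_smul_add_self (hKf : B K f = -2) (hff : B f f = 0) (β : R) :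
    B (-K + β • f) (-K + β • f + K) = 2 * β := by
  rw [neg_add_cancel_comm]
  simp [hKf, hff, mul_comm]

theorem apply_neg_add_smul_self (hKf : B K f = -2) (hfK : B f K = -2) (hff : B f f = 0)
    (β : R) : B (-K + β • f) (-K + β • f) = B K K + 4 * β := by
  simp only [map_add, map_neg, map_smul, LinearMap.add_apply, LinearMap.neg_apply,
    LinearMap.smul_apply, smul_eq_mul, hKf, hfK, hff]
  ring

end ConicBundleLattice

theorem stmt_10_general (Pic : Type) [AddCommGroup Pic]
    (inter : Pic →ₗ[ℤ] Pic →ₗ[ℤ] ℤ)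
    (hsymm : ∀ x y, inter x y = inter y x)
    (K f C : Pic) (k a : ℤ)
    (hKK : inter K K = 8 - k) (hKf : inter K f = -2) (hff : inter f f = 0)
    (α β : ℤ) (hC : C = α • K + β • f)
    (hCf : inter C f = 2)
    (hgenus : inter C (C + K) = 2 * (a - 1) - 2) :
    C = -K + (a - 2) • f ∧ inter C C = 4 * a - k := by
  have hα : α = -1 := by
    rw [hC, apply_smul_add_smul_fiber inter hKf hff] at hCf
    linarith
  have hC' : C = -K + β • f := by rw [hC, hα, neg_one_smul]
  have hβ : β = a - 2 := by
    rw [hC', apply_neg_add_smul_add_self inter hKf hff] at hgenus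
    linarith
  refine ⟨hC'.trans (by rw [hβ]), ?_⟩
  rw [hC', apply_neg_add_smul_self inter hKf ((hsymm f K).trans hKf) hff, hKK, hβ]
  ring

/-- On a `(ℤ/2)²`-conic bundle `π : S → ℙ¹` with `k` singular fibers, the curve
`Cᵢ` fixed by the involution `σᵢ`, a hyperelliptic curve ramified over `2aᵢ`
points of `ℙ¹` (so of genus `aᵢ - 1`), is linearly equivalent to
`-K_S + (aᵢ - 2)·f` and satisfies `Cᵢ² = 4aᵢ - k`.
The Picard group is modelled as an abelian group with its (symmetric, bilinear)
intersection form; `C` is invariant, hence lies in `Pic(S)^G = ℤK_S ⊕ ℤf`,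
which is recorded by the decomposition `C = α•K + β•f`; the hypotheses
`C·f = 2` and the genus formula `C·(C + K) = 2g - 2 = 2(aᵢ - 1) - 2`
are as in the paper. -/
theorem stmt_10 (Pic : Type) [AddCommGroup Pic]
    (inter : Pic →ₗ[ℤ] Pic →ₗ[ℤ] ℤ)
    (hsymm : ∀ x y, inter x y = inter y x)
    (K f C : Pic) (k a : ℤ) (ha : 1 ≤ a)
    (hKK : inter K K = 8 - k) (hKf : inter K f = -2) (hff : inter f f = 0)
    (α β : ℤ) (hC : C = α • K + β • f)
    (hCf : inter C f = 2)
    (hgenus : inter C (C + K) = 2 * (a - 1) - 2) :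
    C = -K + (a - 2) • f ∧ inter C C = 4 * a - k :=
  stmt_10_general Pic inter hsymm K f C k a hKK hKf hff α β hC hCf hgenus
end

section
/- Let S ⊂ P³ be the smooth cubic surface with equation W³ + W(X² + Y² + Z²) + βXYZ = 0 with β ∈ C, β ≠ 0. Every point of S fixed by the cyclic permutation automorphism (W:X:Y:Z) ↦ (W:Y:Z:X) is of the form (u : v : v : v) with u, v ∈ C*, and the group generated by (W:X:Y:Z) ↦ (W:X:−Y:−Z) and (W:X:Y:Z) ↦ (W:−X:−Y:Z) (each of which preserves S) sends each such point to 3 other distinct points. In particular no point of S is fixed by the whole group generated by these three automorphisms. -/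
/-!
A vector `v` with `cyc v = c • v` and `v 0 ≠ 0` has `c = 1`, hence `v = (u, w, w, w)`. On `S`
the case `v 0 = 0` is impossible: then `Y = cX`, `Z = c²X` and the equation becomes
`β c³ X³ = 0`, forcing `v = 0`; and `w = 0` would force `u³ = 0`. Two vectors that agree in a
nonzero coordinate are proportional only if they are equal, while the four images of
`(u, w, w, w)` agree in `W` and differ by sign changes of the nonzero coordinates `X, Y, Z`.
-/

/-- Projective equality of homogeneous coordinate vectors. -/
def ProjEq {n : ℕ} (v w : Fin n → ℂ) : Prop := ∃ c : ℂ, c ≠ 0 ∧ w = c • v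

/-- The cubic form `W³ + W(X² + Y² + Z²) + βXYZ` in coordinates
`(W, X, Y, Z) = (v 0, v 1, v 2, v 3)`. -/
def cubicβ (β : ℂ) (v : Fin 4 → ℂ) : ℂ :=
  v 0 ^ 3 + v 0 * (v 1 ^ 2 + v 2 ^ 2 + v 3 ^ 2) + β * (v 1 * v 2 * v 3)

/-- The cyclic permutation `(W:X:Y:Z) ↦ (W:Y:Z:X)`. -/
def cyc (v : Fin 4 → ℂ) : Fin 4 → ℂ := ![v 0, v 2, v 3, v 1]

/-- The automorphism `(W:X:Y:Z) ↦ (W:X:-Y:-Z)`. -/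
def inv₁ (v : Fin 4 → ℂ) : Fin 4 → ℂ := ![v 0, v 1, -v 2, -v 3]

/-- The automorphism `(W:X:Y:Z) ↦ (W:-X:-Y:Z)`. -/
def inv₂ (v : Fin 4 → ℂ) : Fin 4 → ℂ := ![v 0, -v 1, -v 2, v 3]

lemma cubicβ_inv₁ (β : ℂ) (v : Fin 4 → ℂ) : cubicβ β (inv₁ v) = cubicβ β v := by
  simp only [cubicβ, inv₁, Matrix.cons_val]
  ring

lemma cubicβ_inv₂ (β : ℂ) (v : Fin 4 → ℂ) : cubicβ β (inv₂ v) = cubicβ β v := by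
  simp only [cubicβ, inv₂, Matrix.cons_val]
  ring

lemma ProjEq.refl {n : ℕ} (v : Fin n → ℂ) : ProjEq v v :=
  ⟨1, one_ne_zero, (one_smul ℂ v).symm⟩

lemma ProjEq.eq_of_apply_eq {n : ℕ} {v w : Fin n → ℂ} (h : ProjEq v w) {i : Fin n}
    (hi : w i = v i) (hvi : v i ≠ 0) : w = v := by
  obtain ⟨c, -, rfl⟩ := h
  have hc : c = 1 := mul_right_cancel₀ hvi (by simpa using hi)
  simp [hc]

lemma not_projEq_of_apply_eq_neg {n : ℕ} {v w : Fin n → ℂ} {i j : Fin n}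
    (hi : w i = v i) (hvi : v i ≠ 0) (hj : w j = -v j) (hvj : v j ≠ 0) : ¬ ProjEq v w := by
  intro h
  rw [h.eq_of_apply_eq hi hvi] at hj
  exact hvj (CharZero.eq_neg_self_iff.mp hj)

lemma not_projEq_inv_orbit {v : Fin 4 → ℂ} (hv : ∀ i, v i ≠ 0) :
    ¬ ProjEq v (inv₁ v) ∧ ¬ ProjEq v (inv₂ v) ∧
      ¬ ProjEq v (inv₁ (inv₂ v)) ∧ ¬ ProjEq (inv₁ v) (inv₂ v) ∧
      ¬ ProjEq (inv₁ v) (inv₁ (inv₂ v)) ∧ ¬ ProjEq (inv₂ v) (inv₁ (inv₂ v)) := by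
  refine ⟨?_, ?_, ?_, ?_, ?_, ?_⟩
  · exact not_projEq_of_apply_eq_neg (i := 0) (j := 2) rfl (hv 0) (by simp [inv₁]) (hv 2)
  · exact not_projEq_of_apply_eq_neg (i := 0) (j := 1) rfl (hv 0) (by simp [inv₂]) (hv 1)
  · exact not_projEq_of_apply_eq_neg (i := 0) (j := 1) rfl (hv 0) (by simp [inv₁, inv₂]) (hv 1)
  · exact not_projEq_of_apply_eq_neg (i := 0) (j := 1) rfl (hv 0) (by simp [inv₁, inv₂]) (hv 1)
  · exact not_projEq_of_apply_eq_neg (i := 0) (j := 1) rfl (hv 0) (by simp [inv₁, inv₂]) (hv 1)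
  · exact not_projEq_of_apply_eq_neg (i := 0) (j := 2) rfl (hv 0) (by simp [inv₁, inv₂])
      (by simpa [inv₂] using hv 2)

lemma eq_diag_of_projEq_cyc {v : Fin 4 → ℂ} (h : ProjEq v (cyc v)) (hv₀ : v 0 ≠ 0) :
    v = ![v 0, v 1, v 1, v 1] := by
  have hfix : cyc v = v := h.eq_of_apply_eq rfl hv₀
  have h₂ : v 2 = v 1 := congrFun hfix 1
  have h₃ : v 3 = v 2 := congrFun hfix 2
  ext i
  fin_cases i <;> simp [h₂, h₃]

lemma apply_zero_ne_zero_of_projEq_cyc {β : ℂ} (hβ : β ≠ 0) {v : Fin 4 → ℂ} (hv : v ≠ 0)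
    (hS : cubicβ β v = 0) (h : ProjEq v (cyc v)) : v 0 ≠ 0 := by
  intro hv₀
  obtain ⟨c, hc, hcyc⟩ := h
  have h₂ : v 2 = c * v 1 := by simpa [cyc] using congrFun hcyc 1
  have h₃ : v 3 = c ^ 2 * v 1 := by
    have : v 3 = c * v 2 := by simpa [cyc] using congrFun hcyc 2
    rw [this, h₂]; ring
  have hcube : β * c ^ 3 * v 1 ^ 3 = 0 := by
    simp only [cubicβ, hv₀, h₂, h₃] at hS
    linear_combination hS
  have hv₁ : v 1 = 0 := by simpa [hβ, hc] using hcube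
  apply hv
  ext i
  fin_cases i <;> simp [hv₀, hv₁, h₂, h₃]

lemma exists_eq_diag_of_projEq_cyc {β : ℂ} (hβ : β ≠ 0) {v : Fin 4 → ℂ} (hv : v ≠ 0)
    (hS : cubicβ β v = 0) (h : ProjEq v (cyc v)) :
    ∃ u w : ℂ, u ≠ 0 ∧ w ≠ 0 ∧ v = ![u, w, w, w] := by
  have hv₀ := apply_zero_ne_zero_of_projEq_cyc hβ hv hS h
  have hdiag := eq_diag_of_projEq_cyc h hv₀
  refine ⟨v 0, v 1, hv₀, fun hv₁ => hv₀ ?_, hdiag⟩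
  rw [hdiag] at hS
  simpa [cubicβ, hv₁] using hS

/-- Let `S ⊂ ℙ³` be the smooth cubic surface
`W³ + W(X² + Y² + Z²) + βXYZ = 0`, `β ≠ 0`.  The maps `inv₁`, `inv₂`
preserve `S`; every point of `S` fixed by the cyclic permutation
`(W:X:Y:Z) ↦ (W:Y:Z:X)` is of the form `(u : v : v : v)` with `u, v ∈ ℂ*`;
and the group generated by `inv₁` and `inv₂` sends each such point to three
other pairwise distinct points.  In particular no point of `S` is fixed by
the whole group generated by the three automorphisms. -/
theorem stmt_16 (β : ℂ) (hβ : β ≠ 0) :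
    (∀ v : Fin 4 → ℂ, cubicβ β (inv₁ v) = cubicβ β v ∧
      cubicβ β (inv₂ v) = cubicβ β v) ∧
    (∀ v : Fin 4 → ℂ, v ≠ 0 → cubicβ β v = 0 → ProjEq v (cyc v) →
      (∃ u w : ℂ, u ≠ 0 ∧ w ≠ 0 ∧ ProjEq ![u, w, w, w] v) ∧
      (¬ ProjEq v (inv₁ v) ∧ ¬ ProjEq v (inv₂ v) ∧
        ¬ ProjEq v (inv₁ (inv₂ v)) ∧ ¬ ProjEq (inv₁ v) (inv₂ v) ∧
        ¬ ProjEq (inv₁ v) (inv₁ (inv₂ v)) ∧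
        ¬ ProjEq (inv₂ v) (inv₁ (inv₂ v)))) ∧
    ¬ ∃ v : Fin 4 → ℂ, v ≠ 0 ∧ cubicβ β v = 0 ∧ ProjEq v (cyc v) ∧
      ProjEq v (inv₁ v) ∧ ProjEq v (inv₂ v) := by
  have diag_ne_zero : ∀ {u w : ℂ}, u ≠ 0 → w ≠ 0 → ∀ i, ![u, w, w, w] i ≠ 0 := by
    intro u w hu hw i
    fin_cases i <;> simpa
  refine ⟨fun v => ⟨cubicβ_inv₁ β v, cubicβ_inv₂ β v⟩, fun v hv hS h => ?_, ?_⟩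
  · obtain ⟨u, w, hu, hw, rfl⟩ := exists_eq_diag_of_projEq_cyc hβ hv hS h
    exact ⟨⟨u, w, hu, hw, ProjEq.refl _⟩, not_projEq_inv_orbit (diag_ne_zero hu hw)⟩
  · rintro ⟨v, hv, hS, h, h₁, -⟩
    obtain ⟨u, w, hu, hw, rfl⟩ := exists_eq_diag_of_projEq_cyc hβ hv hS h
    exact (not_projEq_inv_orbit (diag_ne_zero hu hw)).1 h₁
end
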